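/- Let G be a Gauss diagram and let G' be obtained from G by adding a single chord c' neither of whose endpoints separates any existing chord endpoint pairs in a way that creates crossings (i.e., c' is isolated, corresponding to a Reidemeister I move). Then for every original chord c, the data i(c), l(c), r(c), and g_c(v) are unchanged (the two new endpoints of c', having opposite signs, lie on the same side of every original chord and contribute 0 to every signed count), and g_{c'}(v) = 0; hence F_{G'}(u,v) = F_G(u,v). -/

import Mathlib

open Finsupp

/-- Formal Laurent polynomials in `v` over `ℤ`, used as exponents of `u`. -/
abbrev LaurentExp : Type := ℤ →₀ ℤ

/-- Formal `ℤ`-linear combinations of symbols `u^p`, `p` a Laurent polynomial in `v`. -/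
abbrev FPoly : Type := LaurentExp →₀ ℤ

/-- A combinatorial Gauss diagram of a knotoid diagram: `n` signed directed chords,
whose `2*n` endpoints (an over-endpoint and an under-endpoint for each chord) occupy
distinct positions along the oriented arc.  The two endpoints of the arc itself lie
before position `0` and after position `2*n - 1`. -/
structure GaussDiagram where
  n : ℕ
  sign : Fin n → ℤ
  overPos : Fin n → Fin (2 * n)
  under : Fin n → Fin (2 * n)
  sign_pm : ∀ c, sign c = 1 ∨ sign c = -1
  endpoints_inj : Function.Injective (Sum.elim overPos under)

namespace GaussDiagram

variable (G : GaussDiagram)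

/-- Position `p` lies strictly between the two endpoints of chord `c`,
i.e. on the side of `c` NOT containing the endpoints of the arc
(the complement of the lead side of `c`). -/
def between (c : Fin G.n) (p : Fin (2 * G.n)) : Prop :=
  min (G.overPos c).val (G.under c).val < p.val ∧ p.val < max (G.overPos c).val (G.under c).val

instance (c : Fin G.n) (p : Fin (2 * G.n)) : Decidable (G.between c p) := by
  unfold between; infer_instance

/-- Chord `e` crosses chord `c`: exactly one endpoint of `e` lies between the endpoints of `c`. -/
def crosses (c e : Fin G.n) : Prop :=
  e ≠ c ∧ (G.between c (G.overPos e) ↔ ¬ G.between c (G.under e))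

instance (c e : Fin G.n) : Decidable (G.crosses c e) := by
  unfold crosses; infer_instance

/-- The signed contribution of the endpoints of chord `e` lying on the lead side of `c`
(the over-endpoint counts `sign e`, the under-endpoint counts `- sign e`). -/
def contrib (c e : Fin G.n) : ℤ :=
  (if ¬ G.between c (G.overPos e) then G.sign e else 0)
    + (if ¬ G.between c (G.under e) then - G.sign e else 0)

/-- The intersection index `i(c)`: the sum of the signs of the chord-endpoints lying on
the lead side of `c`, excluding the endpoints of `c` itself. -/
def i (c : Fin G.n) : ℤ := ∑ e ∈ Finset.univ.erase c, G.contrib c e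

/-- `r(c)`: chords crossing `c` whose over-endpoint lies on the lead side of `c`
(chords pointing away from the lead side). -/
def rset (c : Fin G.n) : Finset (Fin G.n) :=
  Finset.univ.filter fun e => G.crosses c e ∧ ¬ G.between c (G.overPos e)

/-- `l(c)`: chords crossing `c` whose under-endpoint lies on the lead side of `c`
(chords pointing toward the lead side). -/
def lset (c : Fin G.n) : Finset (Fin G.n) :=
  Finset.univ.filter fun e => G.crosses c e ∧ ¬ G.between c (G.under e)

end GaussDiagram

/-- The reduction map `φ` modulo `m`, realized by canonical representatives in `ℤ`:
for `m ≠ 0` it picks the representative in `[0, m)`; for `m = 0` it is the identity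
(no reduction, matching `ℤ[v,v⁻¹]/(v⁰ - 1) = ℤ[v,v⁻¹]`). -/
def redExp (m : ℕ) (k : ℤ) : ℤ := if m = 0 then k else k % (m : ℤ)

namespace GaussDiagram

variable (G : GaussDiagram)

/-- The index function `g_c(v) = Σ_{r ∈ r(c)} sign(r) v^{φ_c(i(r))} - Σ_{l ∈ l(c)} sign(l) v^{φ_c(-i(l))}`,
an element of `ℤ[v,v⁻¹]/(v^{|i(c)|} - 1)` realized via canonical exponent representatives. -/
noncomputable def gfun (c : Fin G.n) : LaurentExp :=
  (∑ e ∈ G.rset c, G.sign e • Finsupp.single (redExp (G.i c).natAbs (G.i e)) (1 : ℤ))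
    - ∑ e ∈ G.lset c, G.sign e • Finsupp.single (redExp (G.i c).natAbs (- G.i e)) (1 : ℤ)

/-- The F-polynomial `F_G(u,v) = Σ_c sign(c) (u^{g_c(v)} - 1)`. -/
noncomputable def F : FPoly :=
  ∑ c : Fin G.n, G.sign c • (Finsupp.single (G.gfun c) (1 : ℤ) - Finsupp.single 0 1)

end GaussDiagram

/-! The re-embedding `ρ` of the old endpoints is order preserving, so every old chord sees the old
endpoints on the same sides as before. The two endpoints of the new chord are adjacent, so they lie
on the same side of every old chord: there they contribute `sign - sign = 0` to `i` and the new
chord crosses nothing. Conversely nothing lies between the endpoints of the new chord, so its sets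
`r` and `l` are empty and `g_{c'} = 0`; its term `sign(c') (u^0 - 1)` in `F` vanishes. -/

namespace GaussDiagram

variable (G : GaussDiagram)

theorem contrib_eq_zero_of_between_iff {c e : Fin G.n}
    (h : G.between c (G.overPos e) ↔ G.between c (G.under e)) : G.contrib c e = 0 := by
  by_cases ho : G.between c (G.overPos e)
  · simp [contrib, ho, h.mp ho]
  · simp [contrib, ho, mt h.mpr ho]

theorem not_crosses_of_between_iff {c e : Fin G.n}
    (h : G.between c (G.overPos e) ↔ G.between c (G.under e)) : ¬ G.crosses c e :=
  fun hce => iff_not_self (h.symm.trans hce.2)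

theorem contrib_self (c : Fin G.n) : G.contrib c c = 0 :=
  G.contrib_eq_zero_of_between_iff <| by simp only [between]; omega

theorem i_eq_sum_contrib (c : Fin G.n) : G.i c = ∑ e, G.contrib c e :=
  Finset.sum_erase _ (G.contrib_self c)

theorem between_iff_of_val_eq_succ {c : Fin G.n} {a b : Fin (2 * G.n)}
    (hab : b.val = a.val + 1) (hao : a ≠ G.overPos c) (hau : a ≠ G.under c)
    (hbo : b ≠ G.overPos c) (hbu : b ≠ G.under c) : G.between c a ↔ G.between c b := by
  simp only [between, ne_eq, Fin.ext_iff] at *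
  omega

theorem not_between_of_adjacent {c : Fin G.n}
    (hadj : (G.under c).val = (G.overPos c).val + 1 ∨ (G.overPos c).val = (G.under c).val + 1)
    (p : Fin (2 * G.n)) : ¬ G.between c p := by
  simp only [between]
  omega

theorem gfun_eq_zero_of_adjacent {c : Fin G.n}
    (hadj : (G.under c).val = (G.overPos c).val + 1 ∨ (G.overPos c).val = (G.under c).val + 1) :
    G.gfun c = 0 := by
  have hcross (e : Fin G.n) : ¬ G.crosses c e :=
    G.not_crosses_of_between_iff <| iff_of_false (G.not_between_of_adjacent hadj _)
      (G.not_between_of_adjacent hadj _)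
  have hr : G.rset c = ∅ := Finset.filter_false_of_mem fun e _ h => hcross e h.1
  have hl : G.lset c = ∅ := Finset.filter_false_of_mem fun e _ h => hcross e h.1
  simp [gfun, hr, hl]

/-- `G'` arises from `G` by a Reidemeister I move adding the isolated chord `new`, numbered last;
the old chords `c` become `ι c`, with their endpoints moved along the order embedding `ρ`. -/
structure R1Extension (G G' : GaussDiagram) where
  card_eq : G'.n = G.n + 1
  ι : Fin G.n → Fin G'.n
  val_ι : ∀ c, (ι c).val = c.val
  new : Fin G'.n
  val_new : new.val = G.n
  ρ : Fin (2 * G.n) → Fin (2 * G'.n)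
  ρ_strictMono : StrictMono ρ
  ρ_ne_overPos_new : ∀ p, ρ p ≠ G'.overPos new
  ρ_ne_under_new : ∀ p, ρ p ≠ G'.under new
  adjacent : (G'.under new).val = (G'.overPos new).val + 1 ∨
    (G'.overPos new).val = (G'.under new).val + 1
  sign_ι : ∀ c, G'.sign (ι c) = G.sign c
  overPos_ι : ∀ c, G'.overPos (ι c) = ρ (G.overPos c)
  under_ι : ∀ c, G'.under (ι c) = ρ (G.under c)

namespace R1Extension

variable {G} {G' : GaussDiagram}

section

variable (M : R1Extension G G')

theorem ι_injective : Function.Injective M.ι :=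
  fun a b h => Fin.ext <| by rw [← M.val_ι a, ← M.val_ι b, h]

theorem ι_ne_new (c : Fin G.n) : M.ι c ≠ M.new := fun h => by
  have := M.val_ι c
  rw [h, M.val_new] at this
  omega

theorem univ_eq_insert_image :
    (Finset.univ : Finset (Fin G'.n)) = insert M.new (Finset.univ.image M.ι) := by
  refine (Finset.eq_univ_of_forall fun x => ?_).symm
  by_cases hx : x.val < G.n
  · exact Finset.mem_insert_of_mem (Finset.mem_image.2 ⟨⟨x.val, hx⟩, Finset.mem_univ _,
      Fin.ext (M.val_ι _)⟩)
  · have := M.card_eq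
    exact Finset.mem_insert.2 (Or.inl (Fin.ext (by rw [M.val_new]; omega)))

theorem new_notMem_image : M.new ∉ Finset.univ.image M.ι := by
  simpa using fun c => M.ι_ne_new c

theorem sum_univ {A : Type*} [AddCommMonoid A] (f : Fin G'.n → A) :
    ∑ x, f x = f M.new + ∑ c, f (M.ι c) := by
  rw [M.univ_eq_insert_image, Finset.sum_insert M.new_notMem_image,
    Finset.sum_image fun a _ b _ h => M.ι_injective h]

theorem filter_univ_eq_image (P : Fin G'.n → Prop) [DecidablePred P] (hP : ¬ P M.new) :
    Finset.univ.filter P = (Finset.univ.filter (P ∘ M.ι)).image M.ι := by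
  rw [M.univ_eq_insert_image, Finset.filter_insert, if_neg hP, Finset.filter_image]
  rfl

theorem between_ι_ρ (c : Fin G.n) (p : Fin (2 * G.n)) :
    G'.between (M.ι c) (M.ρ p) ↔ G.between c p := by
  simp only [between, M.overPos_ι, M.under_ι, min_lt_iff, lt_max_iff, ← Fin.lt_def,
    M.ρ_strictMono.lt_iff_lt]

theorem crosses_ι_ι_iff (c e : Fin G.n) : G'.crosses (M.ι c) (M.ι e) ↔ G.crosses c e := by
  simp only [crosses, M.overPos_ι, M.under_ι, M.between_ι_ρ, ne_eq, M.ι_injective.eq_iff]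

theorem contrib_ι_ι (c e : Fin G.n) : G'.contrib (M.ι c) (M.ι e) = G.contrib c e := by
  simp only [contrib, M.overPos_ι, M.under_ι, M.between_ι_ρ, M.sign_ι]

theorem between_ι_overPos_new_iff (c : Fin G.n) :
    G'.between (M.ι c) (G'.overPos M.new) ↔ G'.between (M.ι c) (G'.under M.new) := by
  have hoo : G'.overPos M.new ≠ G'.overPos (M.ι c) :=
    M.overPos_ι c ▸ (M.ρ_ne_overPos_new _).symm
  have hou : G'.overPos M.new ≠ G'.under (M.ι c) := M.under_ι c ▸ (M.ρ_ne_overPos_new _).symm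
  have huo : G'.under M.new ≠ G'.overPos (M.ι c) := M.overPos_ι c ▸ (M.ρ_ne_under_new _).symm
  have huu : G'.under M.new ≠ G'.under (M.ι c) := M.under_ι c ▸ (M.ρ_ne_under_new _).symm
  rcases M.adjacent with h | h
  · exact G'.between_iff_of_val_eq_succ h hoo hou huo huu
  · exact (G'.between_iff_of_val_eq_succ h huo huu hoo hou).symm

theorem not_crosses_ι_new (c : Fin G.n) : ¬ G'.crosses (M.ι c) M.new :=
  G'.not_crosses_of_between_iff (M.between_ι_overPos_new_iff c)

theorem i_ι (c : Fin G.n) : G'.i (M.ι c) = G.i c := by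
  rw [i_eq_sum_contrib, i_eq_sum_contrib, M.sum_univ,
    G'.contrib_eq_zero_of_between_iff (M.between_ι_overPos_new_iff c), zero_add]
  exact Finset.sum_congr rfl fun e _ => M.contrib_ι_ι c e

theorem lset_ι (c : Fin G.n) : G'.lset (M.ι c) = (G.lset c).image M.ι := by
  rw [lset, M.filter_univ_eq_image _ fun h => M.not_crosses_ι_new c h.1]
  congr 1
  exact Finset.filter_congr fun e _ => by
    simp only [Function.comp, M.crosses_ι_ι_iff, M.under_ι, M.between_ι_ρ]

theorem rset_ι (c : Fin G.n) : G'.rset (M.ι c) = (G.rset c).image M.ι := by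
  rw [rset, M.filter_univ_eq_image _ fun h => M.not_crosses_ι_new c h.1]
  congr 1
  exact Finset.filter_congr fun e _ => by
    simp only [Function.comp, M.crosses_ι_ι_iff, M.overPos_ι, M.between_ι_ρ]

theorem gfun_ι (c : Fin G.n) : G'.gfun (M.ι c) = G.gfun c := by
  simp only [gfun, M.lset_ι, M.rset_ι, M.i_ι,
    Finset.sum_image fun a _ b _ h => M.ι_injective h, M.sign_ι]

theorem gfun_new : G'.gfun M.new = 0 :=
  G'.gfun_eq_zero_of_adjacent M.adjacent

end

theorem F_eq (M : R1Extension G G') : G'.F = G.F := by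
  rw [F, F, M.sum_univ, M.gfun_new, sub_self, smul_zero, zero_add]
  simp only [M.sign_ι, M.gfun_ι]

end R1Extension

end GaussDiagram

/-- let `G'` be obtained from `G` by a Reidemeister I move, i.e. by adding a
single isolated chord `c'` whose two endpoints are adjacent along the arc (all original
chords are re-embedded by a strictly monotone position map `ρ` onto the complement of the
two new endpoints, keeping their signs).  Then for every original chord `c` the data
`i(c)`, `l(c)`, `r(c)` and `g_c(v)` are unchanged (the two new endpoints, having opposite
signs, lie on the same side of every original chord and contribute `0` to every signed
count), `g_{c'}(v) = 0`, and hence `F_{G'}(u,v) = F_G(u,v)`. -/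
theorem r1_invariance (G G' : GaussDiagram) (hn : G'.n = G.n + 1)
    (ι : Fin G.n → Fin G'.n) (hι : ∀ c, (ι c).val = c.val)
    (c' : Fin G'.n) (hc' : c'.val = G.n)
    (ρ : Fin (2 * G.n) → Fin (2 * G'.n)) (hmono : StrictMono ρ)
    (hrange : ∀ q : Fin (2 * G'.n), (∃ p, ρ p = q) ↔ q ≠ G'.overPos c' ∧ q ≠ G'.under c')
    (hadj : (G'.under c').val = (G'.overPos c').val + 1 ∨
            (G'.overPos c').val = (G'.under c').val + 1)
    (hsign : ∀ c, G'.sign (ι c) = G.sign c)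
    (hover : ∀ c, G'.overPos (ι c) = ρ (G.overPos c))
    (hunder : ∀ c, G'.under (ι c) = ρ (G.under c)) :
    (∀ c : Fin G.n, G'.i (ι c) = G.i c) ∧
    (∀ c : Fin G.n, G'.lset (ι c) = (G.lset c).image ι) ∧
    (∀ c : Fin G.n, G'.rset (ι c) = (G.rset c).image ι) ∧
    (∀ c : Fin G.n, G'.gfun (ι c) = G.gfun c) ∧
    G'.gfun c' = 0 ∧ G'.F = G.F := by
  have hρ (p : Fin (2 * G.n)) := (hrange (ρ p)).1 ⟨p, rfl⟩
  let M : GaussDiagram.R1Extension G G' :=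
    ⟨hn, ι, hι, c', hc', ρ, hmono, fun p => (hρ p).1, fun p => (hρ p).2, hadj, hsign, hover,
      hunder⟩
  exact ⟨M.i_ι, M.lset_ι, M.rset_ι, M.gfun_ι, M.gfun_new, M.F_eq⟩
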